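/- Let (E, ‖·‖) be a complex Banach space, x ∈ E, r > 0, and let f : B_r(x) → E be a complex-analytic map on the open ball B_r(x) such that the Fréchet derivative f′(x) equals the identity id_E and the map y ↦ f(y) − y is Lipschitz on B_r(x) with Lipschitz constant ≤ 1/2. Then f(B_r(x)) is open in E, f : B_r(x) → f(B_r(x)) is a bijection whose inverse is complex analytic, and B_{r/2}(f(x)) ⊆ f(B_r(x)) ⊆ B_{3r/2}(f(x)). -/

import Mathlib

/-!
Since `y ↦ f y - y` is `1/2`-Lipschitz, `f` approximates the identity on `B_r(x)` with
constant `1/2`, so the contraction argument behind the inverse function theorem makes `f` an open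
partial homeomorphism from `B_r(x)` onto its image, and this image contains
`B_{(1 - 1/2) r}(f x)`; the outer inclusion only says that `f` is `(1 + 1/2)`-Lipschitz.
At every point of the ball `‖f' - id‖ ≤ 1/2 < 1`, so the derivative is invertible (Neumann
series), and the inverse of an analytic homeomorphism with invertible derivative is analytic.
-/

open Metric
open scoped NNReal Topology

theorem LipschitzOnWith.image_ball_subset_ball {α β : Type*} [PseudoMetricSpace α]
    [PseudoMetricSpace β] {f : α → β} {K : ℝ≥0} {x : α} {r : ℝ}
    (hf : LipschitzOnWith K f (ball x r)) (hK : K ≠ 0) :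
    f '' ball x r ⊆ ball (f x) (K * r) := by
  rintro _ ⟨y, hy, rfl⟩
  exact (hf.dist_le_mul y hy x (mem_ball_self (pos_of_mem_ball hy))).trans_lt
    (by gcongr; exact hy)

section

variable {𝕜 : Type*} [NontriviallyNormedField 𝕜] {E F : Type*} [NormedAddCommGroup E]
  [NormedSpace 𝕜 E] [NormedAddCommGroup F] [NormedSpace 𝕜 F]

theorem ApproximatesLinearOn.ball_subset_image_ball [CompleteSpace E] {f : E → F}
    {f' : E →L[𝕜] F} {x : E} {r : ℝ} {c : ℝ≥0} (hf : ApproximatesLinearOn f f' (ball x r) c)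
    (f'symm : f'.NonlinearRightInverse) (hc : c < f'symm.nnnorm⁻¹) :
    ball (f x) (((f'symm.nnnorm : ℝ)⁻¹ - c) * r) ⊆ f '' ball x r := by
  intro w hw
  have hk : (0 : ℝ) < (f'symm.nnnorm : ℝ)⁻¹ - c := sub_pos.2 (mod_cast hc)
  have hεr : dist w (f x) / ((f'symm.nnnorm : ℝ)⁻¹ - c) < r := by
    rw [div_lt_iff₀ hk, mul_comm]
    exact hw
  have hsurj := hf.surjOn_closedBall_of_nonlinearRightInverse f'symm
    (by positivity) (closedBall_subset_ball hεr)
  exact Set.image_mono (closedBall_subset_ball hεr)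
    (hsurj (mem_closedBall.2 (mul_div_cancel₀ _ hk.ne').ge))

/-- Unlike `(ContinuousLinearEquiv.refl 𝕜 E).toNonlinearRightInverse`, whose bound is
`‖id‖₊ = 0` when `E` is trivial, this right inverse has bound `1` on every space. -/
def ContinuousLinearMap.NonlinearRightInverse.id :
    (ContinuousLinearMap.id 𝕜 E).NonlinearRightInverse where
  toFun := _root_.id
  nnnorm := 1
  bound' y := by simp
  right_inv' _ := rfl

theorem subsingleton_or_lt_inv_nnnorm_id {c : ℝ≥0} (hc : c < 1) :
    Subsingleton E ∨ c < ‖ContinuousLinearMap.id 𝕜 E‖₊⁻¹ := by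
  rcases subsingleton_or_nontrivial E with h | h
  · exact .inl h
  · exact .inr (by rwa [ContinuousLinearMap.nnnorm_id, inv_one])

theorem exists_fderiv_eq_equiv_of_lipschitzOnWith_sub [CompleteSpace E] {f : E → E}
    {s : Set E} {y : E} {c : ℝ≥0} (hc : c < 1) (hs : s ∈ 𝓝 y) (hf : DifferentiableAt 𝕜 f y)
    (hlip : LipschitzOnWith c (fun z => f z - z) s) :
    ∃ i : E ≃L[𝕜] E, fderiv 𝕜 f y = i := by
  have hnorm : ‖1 - fderiv 𝕜 f y‖ < 1 := by
    have h := norm_fderiv_le_of_lipschitzOn 𝕜 hs hlip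
    rw [fderiv_fun_sub hf differentiableAt_fun_id, fderiv_fun_id, norm_sub_rev] at h
    exact h.trans_lt (mod_cast hc)
  have hunit : IsUnit (fderiv 𝕜 f y) := by
    simpa using isUnit_one_sub_of_norm_lt_one hnorm
  exact ⟨ContinuousLinearEquiv.unitsEquiv 𝕜 E hunit.unit, rfl⟩

theorem OpenPartialHomeomorph.analyticOnNhd_symm (Φ : OpenPartialHomeomorph E F)
    (hΦ : AnalyticOnNhd 𝕜 Φ Φ.source)
    (hd : ∀ y ∈ Φ.source, ∃ i : E ≃L[𝕜] F, fderiv 𝕜 Φ y = i) :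
    AnalyticOnNhd 𝕜 Φ.symm Φ.target := fun w hw => by
  obtain ⟨i, hi⟩ := hd _ (Φ.map_target hw)
  exact Φ.analyticAt_symm hw (hΦ _ (Φ.map_target hw)) hi

end

theorem stmt_8 {E : Type*} [NormedAddCommGroup E] [NormedSpace ℂ E] [CompleteSpace E]
    (x : E) (r : ℝ) (f : E → E)
    (hf : AnalyticOnNhd ℂ f (ball x r))
    (hlip : LipschitzOnWith (1/2 : NNReal) (fun y => f y - y) (ball x r)) :
    IsOpen (f '' ball x r) ∧
    Set.InjOn f (ball x r) ∧
    (∃ g : E → E, AnalyticOnNhd ℂ g (f '' ball x r) ∧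
      (∀ y ∈ ball x r, g (f y) = y) ∧
      ∀ w ∈ f '' ball x r, g w ∈ ball x r ∧ f (g w) = w) ∧
    ball (f x) (r / 2) ⊆ f '' ball x r ∧
    f '' ball x r ⊆ ball (f x) (3 * r / 2) := by
  have hhalf : (1 / 2 : ℝ≥0) < 1 := by norm_num
  have hA : ApproximatesLinearOn f (ContinuousLinearEquiv.refl ℂ E : E →L[ℂ] E) (ball x r)
      (1 / 2) := hlip.approximatesLinearOn
  have hN := subsingleton_or_lt_inv_nnnorm_id (𝕜 := ℂ) (E := E) hhalf
  let Φ := hA.toOpenPartialHomeomorph f (ball x r) hN isOpen_ball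
  refine ⟨Φ.open_target, hA.injOn hN, ⟨Φ.symm, ?_, fun y hy => Φ.left_inv hy,
    fun w hw => ⟨Φ.map_target hw, Φ.right_inv hw⟩⟩, ?_, ?_⟩
  · refine Φ.analyticOnNhd_symm hf fun y hy => ?_
    exact exists_fderiv_eq_equiv_of_lipschitzOnWith_sub hhalf (isOpen_ball.mem_nhds hy)
      (hf y hy).differentiableAt hlip
  · convert hA.ball_subset_image_ball ContinuousLinearMap.NonlinearRightInverse.id
      (by simpa [ContinuousLinearMap.NonlinearRightInverse.id] using hhalf) using 2
    simp only [ContinuousLinearMap.NonlinearRightInverse.id, NNReal.coe_one, inv_one]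
    push_cast
    ring
  · have h := (hlip.add LipschitzWith.id.lipschitzOnWith).image_ball_subset_ball
      (by norm_num)
    simp only [sub_add_cancel, id] at h
    convert h using 2
    push_cast
    ring
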